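/- Let n be even and let C₀ = {c₀, c₁, …, c_n} ⊆ 𝔽ⁿ where c₀ = 0 and supp(c_i) = {1, 2, …, i} for i = 1, …, n, and let C_u = {a ∈ 𝔽ⁿ : a ∈ C₀ or ā ∈ C₀}. Then for every word x ∈ 𝔽ⁿ there exists a ∈ C_u with d(x, a) = d(x, ā) = n/2. -/

import Mathlib

open Finset

/-- The Hamming ball of radius `r` around `x` in `𝔽ⁿ = {0,1}ⁿ`. -/
def ballH (n r : ℕ) (x : Fin n → Bool) : Finset (Fin n → Bool) :=
  Finset.univ.filter (fun y => hammingDist x y ≤ r)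

/-- `C` is an `(r, ≤ ℓ)`-identifying code in `𝔽ⁿ`. -/
def IdCode (n r ℓ : ℕ) (C : Finset (Fin n → Bool)) : Prop :=
  C.Nonempty ∧ ∀ X Y : Finset (Fin n → Bool),
    X.card ≤ ℓ → Y.card ≤ ℓ → X ≠ Y →
      (X.biUnion (ballH n r)) ∩ C ≠ (Y.biUnion (ballH n r)) ∩ C

/-- The smallest cardinality of an `(r, ≤ ℓ)`-identifying code in `𝔽ⁿ`. -/
noncomputable def Mid (n r ℓ : ℕ) : ℕ :=
  sInf {k | ∃ C : Finset (Fin n → Bool), IdCode n r ℓ C ∧ C.card = k}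

/-- binary entropy -/
noncomputable def binH (x : ℝ) : ℝ :=
  -(x * Real.logb 2 x) - (1 - x) * Real.logb 2 (1 - x)

/-- m_n(r,ℓ) -/
noncomputable def mlow (n r ℓ : ℕ) : ℕ :=
  sInf {k | ∃ X Y : Finset (Fin n → Bool), X ≠ Y ∧ 1 ≤ X.card ∧ X.card ≤ ℓ ∧
    1 ≤ Y.card ∧ Y.card ≤ ℓ ∧
    (symmDiff (X.biUnion (ballH n r)) (Y.biUnion (ballH n r))).card = k}

/-- N_ℓ : the number of unordered pairs {X, Y} of distinct subsets with 1 ≤ card ≤ ℓ. -/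
def Npairs (n ℓ : ℕ) : ℕ :=
  (((Finset.univ : Finset (Finset (Fin n → Bool))).filter
      (fun X => 1 ≤ X.card ∧ X.card ≤ ℓ)).powersetCard 2).card

/-!
Consecutive prefix words `c_i, c_{i+1}` differ in one coordinate, so `i ↦ d(x, c_i)` moves by at
most one per step, and `c_n = c̄₀` gives `d(x, c₀) + d(x, c_n) = n`. A discrete intermediate value
argument yields `i` with `d(x, c_i) = n / 2`, and then `d(x, c̄_i) = n - n / 2 = n / 2`.
-/

theorem hammingDist_add_hammingDist_not {ι : Type*} [Fintype ι] (x y : ι → Bool) :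
    hammingDist x y + hammingDist x (fun i => !y i) = Fintype.card ι := by
  have hnot : hammingDist x (fun i => !y i) = #{i | ¬x i ≠ y i} :=
    congrArg card <| filter_congr fun i _ => by simp [Bool.eq_not_iff]
  rw [hnot, hammingDist, card_filter_add_card_filter_not, card_univ]

theorem abs_sub_hammingDist_le {ι : Type*} [Fintype ι] {β : ι → Type*} [∀ i, DecidableEq (β i)]
    (x y z : ∀ i, β i) : |(hammingDist x z : ℤ) - hammingDist x y| ≤ hammingDist y z := by
  have h₁ := hammingDist_triangle x y z
  have h₂ := hammingDist_triangle x z y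
  rw [hammingDist_comm z y] at h₂
  rw [abs_le]
  constructor <;> omega

theorem exists_eq_of_succ_le_add_one {g : ℕ → ℤ} (hg : ∀ i, g (i + 1) ≤ g i + 1) {m : ℤ} :
    ∀ {N : ℕ}, g 0 ≤ m → m ≤ g N → ∃ i ≤ N, g i = m
  | 0, h₀, hN => ⟨0, le_rfl, le_antisymm h₀ hN⟩
  | N + 1, h₀, hN => by
    rcases le_or_gt m (g N) with hm | hm
    · obtain ⟨i, hi, rfl⟩ := exists_eq_of_succ_le_add_one hg h₀ hm
      exact ⟨i, hi.trans N.le_succ, rfl⟩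
    · exact ⟨N + 1, le_rfl, le_antisymm (by linarith [hg N]) hN⟩

theorem exists_eq_of_abs_succ_sub_le_one {g : ℕ → ℤ} (hg : ∀ i, |g (i + 1) - g i| ≤ 1) {m : ℤ}
    {N : ℕ} (hm : m ∈ Set.uIcc (g 0) (g N)) : ∃ i ≤ N, g i = m := by
  rcases Set.mem_uIcc.1 hm with ⟨h₀, hN⟩ | ⟨hN, h₀⟩
  · exact exists_eq_of_succ_le_add_one (fun i => by linarith [(abs_le.1 (hg i)).2]) h₀ hN
  · obtain ⟨i, hi, hgi⟩ := exists_eq_of_succ_le_add_one (g := fun i => -g i) (m := -m)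
      (fun i => by linarith [(abs_le.1 (hg i)).1]) (neg_le_neg h₀) (neg_le_neg hN)
    exact ⟨i, hi, neg_inj.1 hgi⟩

/-- The paper's `c_i`: coordinates are `0`-indexed, so its support is `{0, …, i - 1}`. -/
def prefixWord (n i : ℕ) : Fin n → Bool := fun j => decide (j.val < i)

theorem hammingDist_prefixWord_succ_le (n i : ℕ) :
    hammingDist (prefixWord n i) (prefixWord n (i + 1)) ≤ 1 := by
  refine card_le_one.2 fun a ha b hb => Fin.ext ?_
  simp only [prefixWord, mem_filter, ne_eq, decide_eq_decide] at ha hb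
  omega

theorem prefixWord_self_eq_not_prefixWord_zero (n : ℕ) :
    prefixWord n n = fun j => !prefixWord n 0 j := by
  funext j
  simp [prefixWord]

/-- For even `n`, with `C₀ = {c₀, …, c_n}` (`supp(c_i)` the first `i`
coordinates) and `C_u = C₀ ∪ {ā : a ∈ C₀}`, every word `x ∈ 𝔽ⁿ` satisfies
`d(x,a) = d(x,ā) = n/2` for some `a ∈ C_u`. -/
theorem exists_codeword_at_half_distance_even (n : ℕ) (hn : Even n) (x : Fin n → Bool) :
    ∃ a : Fin n → Bool,
      ((∃ i ≤ n, a = fun j : Fin n => decide (j.val < i)) ∨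
        (∃ i ≤ n, (fun j => !a j) = fun j : Fin n => decide (j.val < i))) ∧
      hammingDist x a = n / 2 ∧ hammingDist x (fun j => !a j) = n / 2 := by
  have hcompl (y : Fin n → Bool) : hammingDist x y + hammingDist x (fun j => !y j) = n := by
    simpa using hammingDist_add_hammingDist_not x y
  have hends := hcompl (prefixWord n 0)
  rw [← prefixWord_self_eq_not_prefixWord_zero] at hends
  obtain ⟨i, hi, hdist⟩ := exists_eq_of_abs_succ_sub_le_one (N := n) (m := (n / 2 : ℕ))
    (g := fun i => hammingDist x (prefixWord n i))
    (fun i => (abs_sub_hammingDist_le x _ _).trans (mod_cast hammingDist_prefixWord_succ_le n i))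
    (by rw [Set.mem_uIcc]; omega)
  have hcompl_i := hcompl (prefixWord n i)
  obtain ⟨k, hk⟩ := hn
  exact ⟨prefixWord n i, Or.inl ⟨i, hi, rfl⟩, by omega, by omega⟩
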